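/- arXiv:2107.09471 — 3 statements merged into one kernel-verified Lean document; each statement's English description precedes it below -/
import Mathlib

section
/- Let (M,g) be an odd-dimensional Riemannian manifold of dimension 2m+1 with volume form μ, and let X be a nowhere-vanishing vector field satisfying curl X = fX for a smooth positive function f (i.e., X is a rotational Beltrami field), where curl X is defined by ι_{curl X} μ = (dX^♭)^m. Then the one-form α := X^♭ is a contact form on M, i.e., α ∧ (dα)^m > 0 everywhere. -/
noncomputable section

/-- The exterior derivative of a one-form `α` (evaluated on constant vector fields):
`dα_p(u,v) = (D_u α)(v) − (D_v α)(u)`. -/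
def oneFormD {E : Type*} [NormedAddCommGroup E] [NormedSpace ℝ E]
    (α : E → E →L[ℝ] ℝ) (p u v : E) : ℝ :=
  fderiv ℝ α p u v - fderiv ℝ α p v u

/-- The `m`-th exterior power `ω^m` of a 2-form `ω`, as a `2m`-form, via the
permutation formula (shuffle convention for the wedge product). -/
def twoFormPow {E : Type*} [NormedAddCommGroup E] [NormedSpace ℝ E]
    (ω : E → E → ℝ) (m : ℕ) (v : Fin (2 * m) → E) : ℝ :=
  ((2 : ℝ) ^ m)⁻¹ * ∑ σ : Equiv.Perm (Fin (2 * m)),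
    ((Equiv.Perm.sign σ : ℤ) : ℝ) *
      ∏ i : Fin m,
        ω (v (σ ⟨2 * i.1, by have := i.isLt; omega⟩))
          (v (σ ⟨2 * i.1 + 1, by have := i.isLt; omega⟩))

/-- The wedge product of a 1-form with a `2m`-form (shuffle convention). -/
def oneWedge {E : Type*} [NormedAddCommGroup E] [NormedSpace ℝ E]
    (m : ℕ) (a : E →L[ℝ] ℝ) (ω : (Fin (2 * m) → E) → ℝ)
    (v : Fin (2 * m + 1) → E) : ℝ :=
  ∑ i : Fin (2 * m + 1), (-1 : ℝ) ^ (i : ℕ) * a (v i) * ω (v ∘ i.succAbove)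

open Equiv Equiv.Perm Module

lemma key_sum {E : Type*} [NormedAddCommGroup E] [NormedSpace ℝ E] {N : ℕ}
    (hN : 0 < N) (hdim : Module.finrank ℝ E = N)
    (A : AlternatingMap ℝ E ℝ (Fin N)) (φ : E →L[ℝ] ℝ) (u : Fin (N + 1) → E) :
    ∑ i : Fin (N + 1), (-1 : ℝ) ^ (i : ℕ) * φ (u i) * A (u ∘ i.succAbove) = 0 := by
  haveI : FiniteDimensional ℝ E := Module.finite_of_finrank_pos (by omega)
  -- u is linearly dependent
  have hdep : ¬ LinearIndependent ℝ u := by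
    intro h
    have := h.fintype_card_le_finrank
    simp [hdim] at this
  set P : MultilinearMap ℝ (fun _ : Fin (N+1) => E) ℝ :=
    LinearMap.uncurryLeft (LinearMap.smulRight (φ.toLinearMap) A.toMultilinearMap) with hP
  have hPapp : ∀ u' : Fin (N+1) → E, P u' = φ (u' 0) * A (Fin.tail u') := by
    intro u'; simp [hP, smul_eq_mul]
  have hB0 : (MultilinearMap.alternatization P) u = 0 :=
    AlternatingMap.map_linearDependent _ u hdep
  rw [MultilinearMap.alternatization_apply] at hB0
  -- reindex by decomposeFin
  rw [← Equiv.sum_comp (Equiv.Perm.decomposeFin (n := N)).symm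
    (fun σ => Equiv.Perm.sign σ • P.domDomCongr σ u)] at hB0
  rw [Fintype.sum_prod_type] at hB0
  have hterm : ∀ (p : Fin (N+1)) (e : Perm (Fin N)),
      Equiv.Perm.sign (Equiv.Perm.decomposeFin.symm (p, e)) •
        P.domDomCongr (Equiv.Perm.decomposeFin.symm (p, e)) u
      = (-1 : ℝ) ^ (p : ℕ) * φ (u p) * A (u ∘ p.succAbove) := by
    intro p e
    set τ := Equiv.Perm.decomposeFin.symm (p, e) with hτ
    have h1 : P.domDomCongr τ u = φ (u p) * A (fun j => u (Equiv.swap 0 p ((e j).succ))) := by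
      rw [MultilinearMap.domDomCongr_apply, hPapp]
      congr 1
      · rw [hτ, Equiv.Perm.decomposeFin_symm_apply_zero]
      · congr 1
        funext j
        simp [Fin.tail, hτ, Equiv.Perm.decomposeFin_symm_apply_succ]
    have h2 : A (fun j => u (Equiv.swap 0 p ((e j).succ)))
        = ((Equiv.Perm.sign e : ℤ) : ℝ) * A (fun j => u (Equiv.swap 0 p (j.succ))) := by
      have heq : (fun j => u (Equiv.swap 0 p ((e j).succ)))
          = (fun j => u (Equiv.swap 0 p (j.succ))) ∘ ⇑e := rfl
      rw [heq, A.map_perm]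
      simp [Units.smul_def, zsmul_eq_mul]
    have h3 : A (fun j => u (Equiv.swap 0 p (j.succ)))
        = (if p = 0 then (1:ℝ) else -1) * (-1 : ℝ) ^ (p : ℕ) * A (u ∘ p.succAbove) := by
      induction p using Fin.cases with
      | zero =>
        have hfun : (fun j : Fin N => u (Equiv.swap 0 0 (j.succ)))
            = u ∘ Fin.succAbove 0 := by
          funext j
          simp only [Equiv.swap_self, Equiv.refl_apply, Function.comp_apply, Fin.zero_succAbove]
        rw [hfun]
        norm_num
      | succ i =>
        have hs : ∀ j : Fin N, Equiv.swap 0 i.succ (j.succ) = i.succ.succAbove (i.cycleRange j) := by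
          intro j
          rw [Fin.succAbove_cycleRange]
        have : (fun j => u (Equiv.swap 0 i.succ (j.succ)))
            = (u ∘ i.succ.succAbove) ∘ (Fin.cycleRange i) := by
          funext j; exact congrArg u (hs j)
        rw [this, AlternatingMap.map_perm, Fin.sign_cycleRange, if_neg (Fin.succ_ne_zero i)]
        rw [Fin.val_succ, pow_succ]
        rcases Nat.even_or_odd (i : ℕ) with hpar | hpar
        · rw [hpar.neg_one_pow, (show ((-1:ℝ))^(i:ℕ) = 1 from hpar.neg_one_pow)]
          norm_num
        · rw [hpar.neg_one_pow, (show ((-1:ℝ))^(i:ℕ) = -1 from hpar.neg_one_pow)]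
          simp
    have hsign : ((Equiv.Perm.sign τ : ℤ) : ℝ)
        = (if p = 0 then (1:ℝ) else -1) * ((Equiv.Perm.sign e : ℤ) : ℝ) := by
      rw [hτ, Equiv.Perm.decomposeFin.symm_sign]
      split <;> simp
    have he2 : ((Equiv.Perm.sign e : ℤ) : ℝ) * ((Equiv.Perm.sign e : ℤ) : ℝ) = 1 := by
      rcases Int.units_eq_one_or (Equiv.Perm.sign e) with h | h <;> simp [h]
    have hp2 : (if p = 0 then (1:ℝ) else -1) * (if p = 0 then (1:ℝ) else -1) = 1 := by
      split <;> norm_num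
    have : (Equiv.Perm.sign τ) • (P.domDomCongr τ u)
        = ((Equiv.Perm.sign τ : ℤ) : ℝ) * (P.domDomCongr τ u) := by
      simp [Units.smul_def, zsmul_eq_mul]
    rw [this, h1, h2, h3, hsign]
    rcases Int.units_eq_one_or (Equiv.Perm.sign e) with hse | hse <;> rw [hse] <;>
      split_ifs <;> push_cast <;> ring
  simp only [hterm] at hB0
  simp only [Finset.sum_const, Finset.card_univ, nsmul_eq_mul] at hB0
  rw [← Finset.mul_sum] at hB0
  have hcard : ((Fintype.card (Perm (Fin N)) : ℝ)) ≠ 0 := by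
    simp [Fintype.card_perm]
    positivity
  exact (mul_eq_zero.mp hB0).resolve_left hcard

lemma insertion {E : Type*} [NormedAddCommGroup E] [NormedSpace ℝ E] {n : ℕ}
    (hdim : Module.finrank ℝ E = n + 1)
    (A : AlternatingMap ℝ E ℝ (Fin (n+1))) (φ : E →L[ℝ] ℝ) (w : E) (v : Fin (n+1) → E) :
    ∑ i : Fin (n+1), (-1 : ℝ) ^ (i : ℕ) * φ (v i) * A (Fin.cons w (v ∘ i.succAbove))
      = φ w * A v := by
  have h := key_sum (Nat.succ_pos n) hdim A φ (Fin.cons w v)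
  rw [Fin.sum_univ_succ] at h
  have h0 : (Fin.cons w v : Fin (n+2) → E) ∘ (0 : Fin (n+2)).succAbove = v := by
    funext j
    simp [Fin.zero_succAbove]
  have hsucc : ∀ j : Fin (n+1),
      (Fin.cons w v : Fin (n+2) → E) ∘ (j.succ).succAbove
        = Fin.cons w (v ∘ j.succAbove) := by
    intro j
    funext k
    induction k using Fin.cases with
    | zero => simp only [Function.comp_apply, Fin.succ_succAbove_zero, Fin.cons_zero]
    | succ l =>
      simp only [Function.comp_apply, Fin.succ_succAbove_succ, Fin.cons_succ]
  simp only [hsucc, Fin.cons_zero, Fin.cons_succ, Fin.val_zero, pow_zero, one_mul,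
    Fin.val_succ, pow_succ] at h
  have : ∀ j : Fin (n+1), (-1:ℝ) ^ (j:ℕ) * -1 * φ (v j) * A (Fin.cons w (v ∘ j.succAbove))
      = -((-1:ℝ) ^ (j:ℕ) * φ (v j) * A (Fin.cons w (v ∘ j.succAbove))) := by
    intro j; ring
  simp only [this] at h
  rw [Finset.sum_neg_distrib, h0] at h
  linarith

/-- on a `(2m+1)`-dimensional Riemannian manifold `(M,g)` with volume
form `μ`, if `X` is a nowhere-vanishing vector field with `curl X = f X` for a
smooth positive `f` (a rotational Beltrami field), where `curl` is defined by
`ι_{curl X} μ = (dX^♭)^m`, then `α := X^♭` is a contact form: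
`α ∧ (dα)^m > 0` everywhere (it is a positive multiple of the volume form). -/
theorem beltrami_gives_contact
    {E : Type*} [NormedAddCommGroup E] [NormedSpace ℝ E] (m : ℕ)
    (hdim : Module.finrank ℝ E = 2 * m + 1)
    (g : E → E →L[ℝ] E →L[ℝ] ℝ)
    (hgsymm : ∀ p u v, g p u v = g p v u)
    (hgpos : ∀ p v, v ≠ 0 → 0 < g p v v)
    (hgsm : ContDiff ℝ (⊤ : ℕ∞) g)
    (μ : E → (Fin (2 * m + 1) → E) → ℝ)
    (hμalt : ∀ p, ∃ Ap : AlternatingMap ℝ E ℝ (Fin (2 * m + 1)), ∀ v, Ap v = μ p v)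
    (hμvol : ∀ (p : E) (b : Fin (2 * m + 1) → E),
      (∀ i j, g p (b i) (b j) = if i = j then 1 else 0) → |μ p b| = 1)
    (X : E → E) (hX : ContDiff ℝ (⊤ : ℕ∞) X) (hX0 : ∀ p, X p ≠ 0)
    (f : E → ℝ) (hf : ContDiff ℝ (⊤ : ℕ∞) f) (hfpos : ∀ p, 0 < f p)
    (hcurl : ∀ (p : E) (v : Fin (2 * m) → E),
      f p * μ p (Fin.cons (X p) v)
        = twoFormPow (oneFormD (fun q => g q (X q)) p) m v) :
    ∀ p : E, ∃ c : ℝ, 0 < c ∧ ∀ v : Fin (2 * m + 1) → E,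
      oneWedge m (g p (X p)) (twoFormPow (oneFormD (fun q => g q (X q)) p) m) v
        = c * μ p v := by
  intro p
  obtain ⟨A, hA⟩ := hμalt p
  refine ⟨f p * g p (X p) (X p), mul_pos (hfpos p) (hgpos p (X p) (hX0 p)), fun v => ?_⟩
  have key := insertion (n := 2 * m) hdim A (g p (X p)) (X p) v
  unfold oneWedge
  have hterm : ∀ i : Fin (2 * m + 1),
      (-1:ℝ) ^ (i:ℕ) * (g p (X p)) (v i)
          * twoFormPow (oneFormD (fun q => g q (X q)) p) m (v ∘ i.succAbove)
      = f p * ((-1:ℝ) ^ (i:ℕ) * (g p (X p)) (v i)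
          * A (Fin.cons (X p) (v ∘ i.succAbove))) := by
    intro i
    rw [← hcurl p (v ∘ i.succAbove), ← hA]
    ring
  rw [Finset.sum_congr rfl (fun i _ => hterm i), ← Finset.mul_sum, key, hA]
  ring
end
end

section
/- Let X be a nowhere-vanishing rotational Beltrami field (curl X = fX with f > 0) on an odd-dimensional Riemannian manifold (M,g) of dimension 2m+1, and let α = X^♭. Then ι_X dα = 0, and X is a positive reparametrization of the Reeb vector field R of α; explicitly R = X / g(X,X). -/
noncomputable section

open Module in
/-- A positive-definite symmetric bilinear form on an `n`-dimensional real vector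
space admits an orthonormal basis. -/
lemma exists_gram_basis {E : Type*} [AddCommGroup E] [Module ℝ E] [FiniteDimensional ℝ E]
    (n : ℕ) (hdim : finrank ℝ E = n)
    (B : E →ₗ[ℝ] E →ₗ[ℝ] ℝ) (hsymm : B.IsSymm)
    (hpos : ∀ v : E, v ≠ 0 → 0 < B v v) :
    ∃ b : Basis (Fin n) ℝ E, ∀ i j, B (b i) (b j) = if i = j then 1 else 0 := by
  obtain ⟨v, hv⟩ := LinearMap.BilinForm.exists_orthogonal_basis hsymm
  let v' : Basis (Fin n) ℝ E := v.reindex (finCongr hdim)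
  have hv' : ∀ i j, i ≠ j → B (v' i) (v' j) = 0 := by
    intro i j hij
    have : ((finCongr hdim).symm i) ≠ ((finCongr hdim).symm j) := by
      intro h; exact hij (by simpa using congrArg (finCongr hdim) h)
    simpa [v', Basis.reindex_apply] using hv this
  have hd : ∀ i, 0 < B (v' i) (v' i) := fun i => hpos _ (v'.ne_zero i)
  have hsq : ∀ i, Real.sqrt (B (v' i) (v' i)) ≠ 0 := fun i =>
    ne_of_gt (Real.sqrt_pos.mpr (hd i))
  let w : Fin n → ℝˣ := fun i => Units.mk0 ((Real.sqrt (B (v' i) (v' i)))⁻¹)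
    (inv_ne_zero (hsq i))
  refine ⟨v'.unitsSMul w, fun i j => ?_⟩
  have happ : ∀ i, (v'.unitsSMul w) i = ((w i : ℝ)) • v' i := fun i =>
    Basis.unitsSMul_apply i
  rw [happ, happ]
  simp only [map_smul, LinearMap.smul_apply, smul_eq_mul]
  by_cases h : i = j
  · subst h
    have hmul : Real.sqrt (B (v' i) (v' i)) * Real.sqrt (B (v' i) (v' i))
        = B (v' i) (v' i) := Real.mul_self_sqrt (hd i).le
    simp only [if_pos rfl, w, Units.val_mk0]
    rw [← hmul]
    field_simp
    rw [if_pos trivial, Real.sqrt_sq (Real.sqrt_nonneg _)]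
    exact div_self (pow_ne_zero 2 (hsq i))
  · simp [if_neg h, hv' i j h]

/-- A skew bilinear form on an odd-dimensional real vector space has nonzero kernel. -/
lemma skew_exists_ker {E : Type*} [AddCommGroup E] [Module ℝ E]
    {n : ℕ} (hn : Odd n) (b : Module.Basis (Fin n) ℝ E)
    (ω : E →ₗ[ℝ] E →ₗ[ℝ] ℝ) (halt : ∀ u v : E, ω u v = - ω v u) :
    ∃ R : E, R ≠ 0 ∧ ∀ u, ω R u = 0 := by
  let M : Matrix (Fin n) (Fin n) ℝ := Matrix.of fun i j => ω (b i) (b j)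
  have hdet : M.det = 0 := by
    have hT : Matrix.transpose M = -M := by
      ext i j
      simp only [Matrix.transpose_apply, Matrix.neg_apply, M, Matrix.of_apply]
      exact halt (b j) (b i)
    have h1 : M.det = (-1 : ℝ) ^ n * M.det := by
      conv_lhs => rw [← Matrix.det_transpose, hT, Matrix.det_neg]
      simp [Fintype.card_fin]
    rw [hn.neg_one_pow] at h1
    linarith
  obtain ⟨c, hc0, hcM⟩ := Matrix.exists_vecMul_eq_zero_iff.mpr hdet
  refine ⟨∑ i, c i • b i, ?_, ?_⟩
  · intro h
    exact hc0 (funext fun i => Fintype.linearIndependent_iff.mp b.linearIndependent c h i)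
  · have hbj : ∀ j, ω (∑ i, c i • b i) (b j) = 0 := by
      intro j
      have h2 := congrFun hcM j
      simp only [Matrix.vecMul, dotProduct, M, Matrix.of_apply,
        Matrix.zero_apply, Pi.zero_apply] at h2
      simp only [map_sum, map_smul, LinearMap.sum_apply, LinearMap.smul_apply,
        smul_eq_mul]
      convert h2 using 2
    intro u
    have hu : u = ∑ j, b.repr u j • b j := (b.sum_repr u).symm
    rw [hu, map_sum]
    refine Finset.sum_eq_zero fun j _ => ?_
    rw [map_smul, smul_eq_mul, hbj j, mul_zero]

/-- `oneFormD` is homogeneous in its first vector argument. -/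
lemma oneFormD_smul_left {E : Type*} [NormedAddCommGroup E] [NormedSpace ℝ E]
    (α : E → E →L[ℝ] ℝ) (p : E) (c : ℝ) (u v : E) :
    oneFormD α p (c • u) v = c * oneFormD α p u v := by
  simp only [oneFormD, map_smul, ContinuousLinearMap.smul_apply, smul_eq_mul]
  ring


/-- a nowhere-vanishing rotational Beltrami field `X` (`curl X = f X`,
`f > 0`) on a `(2m+1)`-dimensional Riemannian manifold satisfies `ι_X dα = 0` for
`α = X^♭`, and `X` is a positive reparametrization of the Reeb field of `α`:
`R = X / g(X,X)` satisfies `α(R) = 1` and `ι_R dα = 0`. -/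
theorem beltrami_reparametrized_reeb
    {E : Type*} [NormedAddCommGroup E] [NormedSpace ℝ E] (m : ℕ)
    (hdim : Module.finrank ℝ E = 2 * m + 1)
    (g : E → E →L[ℝ] E →L[ℝ] ℝ)
    (hgsymm : ∀ p u v, g p u v = g p v u)
    (hgpos : ∀ p v, v ≠ 0 → 0 < g p v v)
    (hgsm : ContDiff ℝ (⊤ : ℕ∞) g)
    (μ : E → (Fin (2 * m + 1) → E) → ℝ)
    (hμalt : ∀ p, ∃ Ap : AlternatingMap ℝ E ℝ (Fin (2 * m + 1)), ∀ v, Ap v = μ p v)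
    (hμvol : ∀ (p : E) (b : Fin (2 * m + 1) → E),
      (∀ i j, g p (b i) (b j) = if i = j then 1 else 0) → |μ p b| = 1)
    (X : E → E) (hX : ContDiff ℝ (⊤ : ℕ∞) X) (hX0 : ∀ p, X p ≠ 0)
    (f : E → ℝ) (hf : ContDiff ℝ (⊤ : ℕ∞) f) (hfpos : ∀ p, 0 < f p)
    (hcurl : ∀ (p : E) (v : Fin (2 * m) → E),
      f p * μ p (Fin.cons (X p) v)
        = twoFormPow (oneFormD (fun q => g q (X q)) p) m v) :
    (∀ p v, oneFormD (fun q => g q (X q)) p (X p) v = 0) ∧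
    (∀ p : E, 0 < g p (X p) (X p)) ∧
    (∀ p : E, g p (X p) ((g p (X p) (X p))⁻¹ • X p) = 1) ∧
    (∀ (p : E) (v : E),
      oneFormD (fun q => g q (X q)) p ((g p (X p) (X p))⁻¹ • X p) v = 0) := by
  haveI : FiniteDimensional ℝ E := FiniteDimensional.of_finrank_pos (by omega)
  have key : ∀ p v, oneFormD (fun q => g q (X q)) p (X p) v = 0 := by
    intro p
    -- the pointwise 2-form `ω = dα_p` as a bilinear map
    set ωL : E →ₗ[ℝ] E →ₗ[ℝ] ℝ := LinearMap.mk₂ ℝ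
      (fun u v => oneFormD (fun q => g q (X q)) p u v)
      (by intro u u' v; simp only [oneFormD, map_add, ContinuousLinearMap.add_apply]; ring)
      (by intro c u v; simp only [oneFormD, map_smul, ContinuousLinearMap.smul_apply,
            smul_eq_mul]; ring)
      (by intro u v v'; simp only [oneFormD, map_add, ContinuousLinearMap.add_apply]; ring)
      (by intro c u v; simp only [oneFormD, map_smul, ContinuousLinearMap.smul_apply,
            smul_eq_mul]; ring) with hωL
    have hωapp : ∀ u v, ωL u v = oneFormD (fun q => g q (X q)) p u v := fun u v => rfl
    have hωalt : ∀ u v : E, ωL u v = - ωL v u := by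
      intro u v; simp only [hωapp, oneFormD]; ring
    -- the pointwise metric as a bilinear map
    set BL : E →ₗ[ℝ] E →ₗ[ℝ] ℝ := LinearMap.mk₂ ℝ
      (fun u v => g p u v)
      (by intro u u' v; simp [map_add])
      (by intro c u v; simp [map_smul])
      (by intro u v v'; simp [map_add])
      (by intro c u v; simp [map_smul]) with hBL
    have hBsymm : BL.IsSymm := LinearMap.isSymm_def.mpr fun u v => hgsymm p u v
    obtain ⟨b, hb⟩ := exists_gram_basis (2 * m + 1) hdim BL hBsymm
      (fun v hv => hgpos p v hv)
    obtain ⟨R, hR0, hRker⟩ := skew_exists_ker ⟨m, by ring⟩ b ωL hωalt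
    have hωR : ∀ u, oneFormD (fun q => g q (X q)) p R u = 0 := fun u => hRker u
    have hωR' : ∀ u, oneFormD (fun q => g q (X q)) p u R = 0 := by
      intro u
      have := hωalt u R
      simp only [hωapp] at this
      rw [this, hωR u, neg_zero]
    obtain ⟨A, hA⟩ := hμalt p
    -- vanishing of `A (X p, w)` whenever `w` contains `R`
    have hvan : ∀ w : Fin (2 * m) → E, (∃ j, w j = R) → A (Fin.cons (X p) w) = 0 := by
      rintro w ⟨j, hj⟩
      have hpow : twoFormPow (oneFormD (fun q => g q (X q)) p) m w = 0 := by
        unfold twoFormPow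
        rw [Finset.sum_eq_zero, mul_zero]
        intro σ _
        rcases Nat.even_or_odd (σ.symm j).1 with he | ho
        · have he' : (σ.symm j).1 % 2 = 0 := Nat.even_iff.mp he
          refine mul_eq_zero_of_right _
            (Finset.prod_eq_zero (Finset.mem_univ
              (⟨(σ.symm j).1 / 2, by have := (σ.symm j).isLt; omega⟩ : Fin m)) ?_)
          have hidx : (⟨2 * ((σ.symm j).1 / 2), by have := (σ.symm j).isLt; omega⟩ :
              Fin (2 * m)) = σ.symm j := Fin.ext (by simp; omega)
          rw [hidx, Equiv.apply_symm_apply, hj]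
          exact hωR _
        · have ho' : (σ.symm j).1 % 2 = 1 := Nat.odd_iff.mp ho
          refine mul_eq_zero_of_right _
            (Finset.prod_eq_zero (Finset.mem_univ
              (⟨(σ.symm j).1 / 2, by have := (σ.symm j).isLt; omega⟩ : Fin m)) ?_)
          have hidx : (⟨2 * ((σ.symm j).1 / 2) + 1, by have := (σ.symm j).isLt; omega⟩ :
              Fin (2 * m)) = σ.symm j := Fin.ext (by simp; omega)
          rw [hidx, Equiv.apply_symm_apply, hj]
          exact hωR' _
      have hc := hcurl p w
      rw [hpow] at hc
      rw [hA]
      exact (mul_eq_zero.mp hc).resolve_left (ne_of_gt (hfpos p))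
    -- main dichotomy
    by_cases hli : LinearIndependent ℝ ![X p, R]
    · exfalso
      have hXR : X p ≠ R := by
        intro h
        have h01 := hli.injective (a₁ := 0) (a₂ := 1) (by simp [h])
        simp at h01
      have hs : LinearIndepOn ℝ id (Set.range ![X p, R]) :=
        (linearIndepOn_id_range_iff hli.injective).mpr hli
      let v0 := Module.Basis.extend hs
      haveI : Fintype (hs.extend (Set.subset_univ _)) :=
        FiniteDimensional.fintypeBasisIndex v0
      have hcard : Fintype.card (hs.extend (Set.subset_univ _)) = 2 * m + 1 := by
        rw [← Module.finrank_eq_card_basis v0, hdim]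
      let e := Fintype.equivFinOfCardEq hcard
      let v : Module.Basis (Fin (2 * m + 1)) ℝ E := v0.reindex e
      have hXmem : X p ∈ hs.extend (Set.subset_univ _) :=
        hs.subset_extend _ ⟨0, by simp⟩
      have hRmem : R ∈ hs.extend (Set.subset_univ _) :=
        hs.subset_extend _ ⟨1, by simp⟩
      have hvX : v (e ⟨X p, hXmem⟩) = X p := by
        simp only [v, Module.Basis.reindex_apply, Equiv.symm_apply_apply]
        exact Module.Basis.extend_apply_self hs _
      have hvR : v (e ⟨R, hRmem⟩) = R := by
        simp only [v, Module.Basis.reindex_apply, Equiv.symm_apply_apply]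
        exact Module.Basis.extend_apply_self hs _
      have hne : e ⟨X p, hXmem⟩ ≠ e ⟨R, hRmem⟩ := by
        intro h
        exact hXR (congrArg Subtype.val (e.injective h))
      set σp : Equiv.Perm (Fin (2 * m + 1)) := Equiv.swap 0 (e ⟨X p, hXmem⟩) with hσp
      have hu0 : (⇑v ∘ ⇑σp) 0 = X p := by
        simp only [Function.comp_apply, hσp, Equiv.swap_apply_left]
        exact hvX
      set j : Fin (2 * m + 1) := σp (e ⟨R, hRmem⟩) with hjdef
      have huj : (⇑v ∘ ⇑σp) j = R := by
        simp only [Function.comp_apply, hjdef, Equiv.swap_apply_self, hσp]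
        exact hvR
      have hj0 : j ≠ 0 := by
        intro h
        apply hne
        have h1 : σp 0 = e ⟨X p, hXmem⟩ := Equiv.swap_apply_left _ _
        have h2 : σp j = e ⟨R, hRmem⟩ := by
          simp only [hjdef, hσp, Equiv.swap_apply_self]
        rw [h] at h2
        rw [h1] at h2
        exact h2
      have hAu : A (⇑v ∘ ⇑σp) = 0 := by
        have hct : (⇑v ∘ ⇑σp) = Fin.cons ((⇑v ∘ ⇑σp) 0) (Fin.tail (⇑v ∘ ⇑σp)) :=
          (Fin.cons_self_tail _).symm
        rw [hct, hu0]
        refine hvan (Fin.tail (⇑v ∘ ⇑σp)) ⟨j.pred hj0, ?_⟩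
        show (⇑v ∘ ⇑σp) ((j.pred hj0).succ) = R
        rw [Fin.succ_pred]
        exact huj
      have hAv : A ⇑v = 0 := by
        have h2 := A.map_perm (⇑v) σp
        rw [hAu] at h2
        rcases Int.units_eq_one_or (Equiv.Perm.sign σp) with h | h <;>
          rw [h] at h2 <;> simpa using h2.symm
      have hAb : A ⇑b = 0 := by
        have heq := A.eq_smul_basis_det v
        calc A ⇑b = (A ⇑v • v.det) ⇑b := by rw [← heq]
          _ = A ⇑v * v.det ⇑b := rfl
          _ = 0 := by rw [hAv, zero_mul]
      have hb' : ∀ i j, g p (b i) (b j) = if i = j then 1 else 0 := fun i j => hb i j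
      have h1 := hμvol p b hb'
      rw [← hA, hAb] at h1
      norm_num at h1
    · rw [LinearIndependent.pair_iff] at hli
      push_neg at hli
      obtain ⟨s, t, hst, hne⟩ := hli
      by_cases hs : s = 0
      · exfalso
        subst hs
        have ht : t ≠ 0 := fun h => hne (by simp [h]) (by simp [h])
        apply hR0
        have : t • R = 0 := by simpa using hst
        exact (smul_eq_zero.mp this).resolve_left ht
      · have hXp : X p = (s⁻¹ * (-t)) • R := by
          have h1 : s • X p = (-t) • R := by
            rw [neg_smul]
            exact eq_neg_of_add_eq_zero_left hst
          calc X p = s⁻¹ • (s • X p) := by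
                rw [smul_smul, inv_mul_cancel₀ hs, one_smul]
            _ = s⁻¹ • ((-t) • R) := by rw [h1]
            _ = (s⁻¹ * (-t)) • R := by rw [smul_smul]
        intro vv
        rw [hXp, oneFormD_smul_left, hωR vv, mul_zero]
  refine ⟨key, fun p => hgpos p (X p) (hX0 p), ?_, ?_⟩
  · intro p
    rw [map_smul, smul_eq_mul, inv_mul_cancel₀ (ne_of_gt (hgpos p (X p) (hX0 p)))]
  · intro p vv
    rw [oneFormD_smul_left, key p vv, mul_zero]
end
end

section
/- Let T' be a reversible Turing machine with the restart property, with transition function extended by δ(q_halt, t) = (q₀, t, 0), and let φ be a bijective generalized shift conjugate to T' via an injective map ϕ. Then for any input tape t, the orbit of φ through the point ϕ(q₀, t) is periodic if and only if T' halts on input (q₀, t). -/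
/-- A Turing machine with state set `Q`, alphabet `A`, initial state `q0`,
halting state `qhalt` and transition function `δ` (relevant away from `qhalt`). -/
structure TMach (Q A : Type) where
  q0 : Q
  qhalt : Q
  δ : Q → A → Q × A × ℤ

/-- Configurations: current state together with the tape. -/
abbrev Cfg (Q A : Type) := Q × (ℤ → A)

/-- One step of the global transition function: update the scanned symbol and
the state, then shift the tape by `ε`.  Halting configurations have no successor. -/
def TMach.step {Q A : Type} [DecidableEq Q] (T : TMach Q A) (c : Cfg Q A) :
    Option (Cfg Q A) :=
  if c.1 = T.qhalt then none
  else
    let r := T.δ c.1 (c.2 0)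
    some (r.1, fun n => Function.update c.2 0 r.2.1 (n + r.2.2))

/-- A Turing machine is reversible if its global transition function is injective. -/
def TMach.Reversible {Q A : Type} [DecidableEq Q] (T : TMach Q A) : Prop :=
  ∀ c c' d : Cfg Q A, T.step c = some d → T.step c' = some d → c = c'

def TMach.Reaches {Q A : Type} [DecidableEq Q] (T : TMach Q A) :
    Cfg Q A → Cfg Q A → Prop :=
  Relation.ReflTransGen fun a b => T.step a = some b

/-- `T` halts on input tape `t` with halting configuration `c`. -/
def TMach.HaltsWith {Q A : Type} [DecidableEq Q] (T : TMach Q A) (t : ℤ → A)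
    (c : Cfg Q A) : Prop :=
  T.Reaches (T.q0, t) c ∧ c.1 = T.qhalt

/-- `T` halts on input tape `t`. -/
def TMach.Halts {Q A : Type} [DecidableEq Q] (T : TMach Q A) (t : ℤ → A) : Prop :=
  ∃ c, T.HaltsWith t c

/-- A generalized shift on bi-infinite sequences `ℤ → A`, given by a shift-amount
map `F` depending only on the positions in `DF` and a rewriting map `G` which
depends only on, and modifies only, the positions in `DG`. -/
structure GenShift (A : Type) where
  DF : Finset ℤ
  DG : Finset ℤ
  F : (ℤ → A) → ℤ
  G : (ℤ → A) → (ℤ → A)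
  F_local : ∀ s s' : ℤ → A, (∀ i ∈ DF, s i = s' i) → F s = F s'
  G_local : ∀ s s' : ℤ → A, (∀ i ∈ DG, s i = s' i) → ∀ i ∈ DG, G s i = G s' i
  G_id : ∀ (s : ℤ → A), ∀ i ∉ DG, G s i = s i

/-- Applying a generalized shift: first rewrite the positions in `DG` via `G`,
then shift the resulting sequence by `F s`. -/
def GenShift.apply {A : Type} (gs : GenShift A) (s : ℤ → A) : ℤ → A :=
  fun n => gs.G s (n + gs.F s)

/-- The cylinder (Cantor block) of sequences whose symbols on `DF ∪ DG` are
prescribed by the pattern `b`. -/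
def GenShift.cyl {A : Type} (gs : GenShift A) (b : {i : ℤ // i ∈ gs.DF ∪ gs.DG} → A) :
    Set (ℤ → A) :=
  {s | ∀ (i : ℤ) (h : i ∈ gs.DF ∪ gs.DG), s i = b ⟨i, h⟩}

/-- The global transition function extended by `δ(q_halt, t) = (q₀, t, 0)`:
from a halting configuration the machine returns to the initial state with the
same tape; elsewhere it performs the usual step. -/
def TMach.stepExt {Q A : Type} [DecidableEq Q] (T : TMach Q A) (c : Cfg Q A) :
    Cfg Q A :=
  if c.1 = T.qhalt then (T.q0, c.2) else (T.step c).getD c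

/-- let `T'` be a reversible Turing machine with the restart property,
with transition function extended by `δ(q_halt,t) = (q₀,t,0)`, and let `φ` be a
bijective generalized shift conjugate to (the extended dynamics of) `T'` via an
injective map `ϕ`.  Then for any input tape `t`, the orbit of `φ` through
`ϕ(q₀, t)` is periodic iff `T'` halts on input `(q₀, t)`. -/
theorem periodic_orbit_iff_halts {Q A : Type} [DecidableEq Q] (T : TMach Q A)
    (hrev : T.Reversible)
    (hrestart : ∀ (t : ℤ → A) (c : Cfg Q A), T.HaltsWith t c → c = (T.qhalt, t))
    (gs : GenShift A) (hbij : Function.Bijective gs.apply)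
    (ϕ : Cfg Q A → (ℤ → A)) (hϕ : Function.Injective ϕ)
    (hconj : ∀ c : Cfg Q A, gs.apply (ϕ c) = ϕ (T.stepExt c)) :
    ∀ t : ℤ → A,
      (∃ k : ℕ, 0 < k ∧ gs.apply^[k] (ϕ (T.q0, t)) = ϕ (T.q0, t)) ↔ T.Halts t := by
  intro t
  have iter : ∀ (k : ℕ) (c : Cfg Q A), gs.apply^[k] (ϕ c) = ϕ (T.stepExt^[k] c) := by
    intro k
    induction k with
    | zero => intro c; simp
    | succ n ih =>
      intro c
      rw [Function.iterate_succ_apply, Function.iterate_succ_apply, hconj, ih]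
  have hinj : Function.Injective T.stepExt := by
    intro a b hab
    apply hϕ
    apply hbij.injective
    rw [hconj, hconj, hab]
  have hext_halt : ∀ s : ℤ → A, T.stepExt (T.qhalt, s) = (T.q0, s) := by
    intro s; simp [TMach.stepExt]
  have hext_step : ∀ c : Cfg Q A, c.1 ≠ T.qhalt → T.step c = some (T.stepExt c) := by
    intro c hc
    simp [TMach.stepExt, TMach.step, hc]
  constructor
  · rintro ⟨k, hk, hper⟩
    rw [iter] at hper
    have hcyc : T.stepExt^[k] (T.q0, t) = (T.q0, t) := hϕ hper
    have hex : ∃ j, (T.stepExt^[j] (T.q0, t)).1 = T.qhalt ∧ j < k := by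
      by_contra hex
      push_neg at hex
      have h1 : T.stepExt^[(k-1)+1] (T.q0, t) = (T.q0, t) := by
        rw [Nat.sub_add_cancel hk]; exact hcyc
      rw [Function.iterate_succ_apply'] at h1
      have h2 := hinj (h1.trans (hext_halt t).symm)
      have h3 := hex (k-1)
      rw [h2] at h3
      exact absurd (Nat.sub_lt hk one_pos) (h3 rfl).not_gt
    have hexx : ∃ j, (T.stepExt^[j] (T.q0, t)).1 = T.qhalt := ⟨hex.choose, hex.choose_spec.1⟩
    set j := Nat.find hexx with hjdef
    have hj : (T.stepExt^[j] (T.q0, t)).1 = T.qhalt := Nat.find_spec hexx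
    have hmin : ∀ i < j, (T.stepExt^[i] (T.q0, t)).1 ≠ T.qhalt := fun i hi =>
      Nat.find_min hexx hi
    have hreach : ∀ i ≤ j, T.Reaches (T.q0, t) (T.stepExt^[i] (T.q0, t)) := by
      intro i hi
      induction i with
      | zero => exact Relation.ReflTransGen.refl
      | succ n ih =>
        refine Relation.ReflTransGen.tail (ih (Nat.le_of_succ_le hi)) ?_
        rw [Function.iterate_succ_apply']
        exact hext_step _ (hmin n (Nat.lt_of_succ_le hi))
    exact ⟨T.stepExt^[j] (T.q0, t), hreach j le_rfl, hj⟩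
  · rintro ⟨c, hreachc, hc⟩
    have hct : c = (T.qhalt, t) := hrestart t c ⟨hreachc, hc⟩
    subst hct
    have key : ∀ c : Cfg Q A, T.Reaches (T.q0, t) c → ∃ n, T.stepExt^[n] (T.q0, t) = c := by
      intro c h
      induction h with
      | refl => exact ⟨0, rfl⟩
      | @tail b c' h1 h2 ih =>
        obtain ⟨n, hn⟩ := ih
        refine ⟨n + 1, ?_⟩
        rw [Function.iterate_succ_apply', hn]
        have hb : b.1 ≠ T.qhalt := fun hh => by simp [TMach.step, hh] at h2
        have hs := hext_step _ hb
        rw [hs] at h2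
        exact Option.some_injective _ h2
    obtain ⟨n, hn⟩ := key _ hreachc
    refine ⟨n + 1, Nat.succ_pos n, ?_⟩
    rw [iter, Function.iterate_succ_apply', hn, hext_halt]
end
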